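/- arXiv:2604.08911 — 2 statements merged into one kernel-verified Lean document; each statement's English description precedes it below -/
import Mathlib

section
/- There is no function a : (1,∞) → (0,∞) such that W₂²(ν^int, ν) ≥ a(𝔯(ν))·(1 − 1/𝔯(ν)) holds for every compactly supported probability measure ν on ℝ that is absolutely continuous with respect to Lebesgue measure, has convex support, and has density ratio 𝔯(ν) ∈ (1,∞). (Counterexamples are obtained by dilating the measure on [0,1] with density g_R(x) = (2/(R+1))(1 + (R−1)x) by a small factor ε, which preserves the density ratio R but makes W₂²(ν^int, ν) ≤ ε²/3 arbitrarily small.) -/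
open MeasureTheory Metric Set
open scoped ENNReal NNReal

noncomputable section

/-- Squared quadratic Wasserstein distance on `ℝ`: infimum of the transport cost over
all couplings. -/
noncomputable def W2sq (μ ν : Measure ℝ) : ℝ≥0∞ :=
  ⨅ (π : Measure (ℝ × ℝ)) (_ : π.map Prod.fst = μ) (_ : π.map Prod.snd = ν),
    ∫⁻ p, (‖p.1 - p.2‖₊ : ℝ≥0∞) ^ 2 ∂π

/-- The interpolation measure `ν^int` on `ℝ`: the law of `ΛX + (1−Λ)Y` with `X, Y ∼ ν`
independent and `Λ` uniform on `[0,1]` independent of `(X,Y)`. -/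
noncomputable def interp (ν : Measure ℝ) : Measure ℝ :=
  ((volume.restrict (Icc (0:ℝ) 1)).prod (ν.prod ν)).map
    (fun p => p.1 * p.2.1 + (1 - p.1) * p.2.2)

/-- The (topological) support of a measure on `ℝ`. -/
def msupport (ν : Measure ℝ) : Set ℝ :=
  {x | ∀ U ∈ nhds x, 0 < ν U}

/-- Density ratio of a density `f` over a set `S`: essential supremum over essential
infimum with respect to Lebesgue measure restricted to `S`. -/
noncomputable def densRatio (f : ℝ → ℝ≥0∞) (S : Set ℝ) : ℝ≥0∞ :=
  essSup f (volume.restrict S) / essInf f (volume.restrict S)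

namespace CEX

variable (ε : ℝ)

def M : ℝ≥0∞ := ENNReal.ofReal (2 / (3 * ε))

def fd : ℝ → ℝ≥0∞ := fun x =>
  (Icc 0 (ε/2)).indicator (fun _ => M ε) x + (Ioc (ε/2) ε).indicator (fun _ => 2 * M ε) x

variable {ε}

lemma M_ne_zero (hε : 0 < ε) : M ε ≠ 0 := by
  simp [M, ENNReal.ofReal_eq_zero]
  positivity

lemma M_ne_top : M ε ≠ ∞ := ENNReal.ofReal_ne_top

lemma measurable_fd : Measurable (fd ε) :=
  ((measurable_const.indicator measurableSet_Icc).add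
    (measurable_const.indicator measurableSet_Ioc))

lemma fd_of_mem_first {x : ℝ} (hx : x ∈ Icc 0 (ε/2)) : fd ε x = M ε := by
  have h2 : x ∉ Ioc (ε/2) ε := fun h => absurd hx.2 (not_le.2 h.1)
  simp [fd, indicator_of_mem hx, indicator_of_notMem h2]

lemma fd_of_mem_second {x : ℝ} (hx : x ∈ Ioc (ε/2) ε) : fd ε x = 2 * M ε := by
  have h1 : x ∉ Icc 0 (ε/2) := fun h => absurd h.2 (not_le.2 hx.1)
  simp [fd, indicator_of_mem hx, indicator_of_notMem h1]

lemma fd_of_not_mem (hε : 0 < ε) {x : ℝ} (hx : x ∉ Icc 0 ε) : fd ε x = 0 := by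
  have h1 : x ∉ Icc 0 (ε/2) := fun h => hx ⟨h.1, h.2.trans (by linarith)⟩
  have h2 : x ∉ Ioc (ε/2) ε := fun h => hx ⟨(by linarith [h.1] : (0:ℝ) ≤ x), h.2⟩
  simp [fd, indicator_of_notMem h1, indicator_of_notMem h2]

lemma M_le_fd (hε : 0 < ε) {x : ℝ} (hx : x ∈ Icc 0 ε) : M ε ≤ fd ε x := by
  rcases le_or_gt x (ε/2) with h | h
  · rw [fd_of_mem_first ⟨hx.1, h⟩]
  · rw [fd_of_mem_second ⟨h, hx.2⟩]
    exact le_mul_of_one_le_left zero_le one_le_two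

lemma fd_le (hε : 0 < ε) (x : ℝ) : fd ε x ≤ 2 * M ε := by
  by_cases hx : x ∈ Icc 0 ε
  · rcases le_or_gt x (ε/2) with h | h
    · rw [fd_of_mem_first ⟨hx.1, h⟩]
      exact le_mul_of_one_le_left zero_le one_le_two
    · rw [fd_of_mem_second ⟨h, hx.2⟩]
  · rw [fd_of_not_mem hε hx]; exact zero_le

lemma lintegral_fd (hε : 0 < ε) : ∫⁻ x, fd ε x = 1 := by
  have h1 : (∫⁻ x, (Icc (0:ℝ) (ε/2)).indicator (fun _ => M ε) x)
      = M ε * ENNReal.ofReal (ε/2) := by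
    rw [lintegral_indicator measurableSet_Icc, setLIntegral_const, Real.volume_Icc]
    norm_num
  have h2 : (∫⁻ x, (Ioc (ε/2) ε).indicator (fun _ => 2 * M ε) x)
      = 2 * M ε * ENNReal.ofReal (ε/2) := by
    rw [lintegral_indicator measurableSet_Ioc, setLIntegral_const, Real.volume_Ioc]
    ring_nf
  simp only [fd]
  rw [lintegral_add_left (measurable_const.indicator measurableSet_Icc), h1, h2]
  rw [M, ← ENNReal.ofReal_ofNat 2, ← ENNReal.ofReal_mul (by positivity),
    ← ENNReal.ofReal_mul (by positivity), ← ENNReal.ofReal_mul (by positivity),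
    ← ENNReal.ofReal_add (by positivity) (by positivity)]
  rw [show 2 / (3*ε) * (ε/2) + 2 * (2/(3*ε)) * (ε/2) = 1 by field_simp; ring]
  exact ENNReal.ofReal_one

end CEX

namespace CEX
variable {ε : ℝ}

lemma nu_compl_zero (hε : 0 < ε) :
    (volume.withDensity (fd ε)) (Icc 0 ε)ᶜ = 0 := by
  rw [withDensity_apply _ measurableSet_Icc.compl]
  rw [setLIntegral_congr_fun measurableSet_Icc.compl
    (fun x hx => fd_of_not_mem hε hx)]
  simp

lemma msupport_nu (hε : 0 < ε) :
    msupport (volume.withDensity (fd ε)) = Icc 0 ε := by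
  ext x
  constructor
  · intro hx
    by_contra hxn
    have h1 : (Icc (0:ℝ) ε)ᶜ ∈ nhds x :=
      (isClosed_Icc.isOpen_compl).mem_nhds hxn
    have := hx _ h1
    rw [nu_compl_zero hε] at this
    exact lt_irrefl 0 this
  · intro hx U hU
    obtain ⟨δ, hδ, hball⟩ := Metric.mem_nhds_iff.1 hU
    rw [Real.ball_eq_Ioo] at hball
    set l := max (x - δ) 0 with hl
    set u := min (x + δ) ε with hu
    have hlu : l < u := by
      rw [hl, hu]
      apply max_lt <;> apply lt_min
      · linarith
      · linarith [hx.2]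
      · linarith [hx.1]
      · exact hε
    have hsub1 : Ioo l u ⊆ U := fun y hy => hball
      ⟨lt_of_le_of_lt (le_max_left _ _) hy.1, lt_of_lt_of_le hy.2 (min_le_left _ _)⟩
    have hsub2 : Ioo l u ⊆ Icc 0 ε := fun y hy =>
      ⟨le_trans (le_max_right _ _) hy.1.le, le_trans hy.2.le (min_le_right _ _)⟩
    have key : M ε * ENNReal.ofReal (u - l) ≤ (volume.withDensity (fd ε)) U := by
      calc M ε * ENNReal.ofReal (u - l) = ∫⁻ y in Ioo l u, M ε := by
            rw [setLIntegral_const, Real.volume_Ioo]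
        _ ≤ ∫⁻ y in Ioo l u, fd ε y := by
            refine lintegral_mono_ae ?_
            filter_upwards [ae_restrict_mem measurableSet_Ioo] with y hy
            exact M_le_fd hε (hsub2 hy)
        _ = (volume.withDensity (fd ε)) (Ioo l u) := by
            rw [withDensity_apply _ measurableSet_Ioo]
        _ ≤ (volume.withDensity (fd ε)) U := measure_mono hsub1
    refine lt_of_lt_of_le ?_ key
    apply ENNReal.mul_pos (M_ne_zero hε)
    simp [ENNReal.ofReal_eq_zero]
    linarith

lemma restrict_Ioc_ne_zero (hε : 0 < ε) :
    volume.restrict (Ioc (ε/2) ε) ≠ 0 := by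
  intro h
  have : volume (Ioc (ε/2) ε) = 0 := by
    rw [← Measure.restrict_apply_univ, h]; simp
  rw [Real.volume_Ioc] at this
  simp [ENNReal.ofReal_eq_zero] at this
  linarith

lemma restrict_Icchalf_ne_zero (hε : 0 < ε) :
    volume.restrict (Icc (0:ℝ) (ε/2)) ≠ 0 := by
  intro h
  have : volume (Icc (0:ℝ) (ε/2)) = 0 := by
    rw [← Measure.restrict_apply_univ, h]; simp
  rw [Real.volume_Icc] at this
  simp [ENNReal.ofReal_eq_zero] at this
  linarith

lemma essSup_fd (hε : 0 < ε) :
    essSup (fd ε) (volume.restrict (Icc 0 ε)) = 2 * M ε := by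
  apply le_antisymm
  · exact essSup_le_of_ae_le _ (ae_of_all _ (fd_le hε))
  · have h1 : essSup (fd ε) (volume.restrict (Ioc (ε/2) ε)) = 2 * M ε := by
      rw [essSup_congr_ae (g := fun _ => 2 * M ε) ?_]
      · exact essSup_const _ (restrict_Ioc_ne_zero hε)
      · filter_upwards [ae_restrict_mem measurableSet_Ioc] with y hy
        exact fd_of_mem_second hy
    rw [← h1]
    refine essSup_mono_measure (Measure.absolutelyContinuous_of_le
      (Measure.restrict_mono ?_ le_rfl))
    exact fun y hy => ⟨by linarith [hy.1], hy.2⟩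

lemma essInf_fd (hε : 0 < ε) :
    essInf (fd ε) (volume.restrict (Icc 0 ε)) = M ε := by
  apply le_antisymm
  · have h1 : essInf (fd ε) (volume.restrict (Icc (0:ℝ) (ε/2))) = M ε := by
      rw [essInf_congr_ae (g := fun _ => M ε) ?_]
      · exact essInf_const _ (restrict_Icchalf_ne_zero hε)
      · filter_upwards [ae_restrict_mem measurableSet_Icc] with y hy
        exact fd_of_mem_first hy
    rw [← h1]
    have hac : volume.restrict (Icc (0:ℝ) (ε/2)) ≪ volume.restrict (Icc (0:ℝ) ε) :=
      Measure.absolutelyContinuous_of_le (Measure.restrict_mono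
        (fun y (hy : y ∈ Icc (0:ℝ) (ε/2)) => (⟨hy.1, by linarith [hy.2]⟩ : y ∈ Icc (0:ℝ) ε)) le_rfl)
    exact essSup_mono_measure (β := ℝ≥0∞ᵒᵈ) hac
  · refine le_essInf_of_ae_le _ ?_
    filter_upwards [ae_restrict_mem measurableSet_Icc] with y hy
    exact M_le_fd hε hy

lemma densRatio_fd (hε : 0 < ε) :
    densRatio (fd ε) (Icc 0 ε) = ENNReal.ofReal 2 := by
  rw [densRatio, essSup_fd hε, essInf_fd hε, mul_div_assoc,
    ENNReal.div_self (M_ne_zero hε) M_ne_top, mul_one]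
  simp

end CEX

lemma prod_compl_prod_zero {α β : Type*} [MeasurableSpace α] [MeasurableSpace β]
    (μ : Measure α) (ν : Measure β) [IsProbabilityMeasure μ] [IsProbabilityMeasure ν]
    {s : Set α} {t : Set β} (hs : μ sᶜ = 0) (ht : ν tᶜ = 0) :
    (μ.prod ν) (s ×ˢ t)ᶜ = 0 := by
  refine le_antisymm ?_ zero_le
  calc (μ.prod ν) (s ×ˢ t)ᶜ ≤ (μ.prod ν) (sᶜ ×ˢ univ) + (μ.prod ν) (univ ×ˢ tᶜ) := by
        rw [Set.compl_prod_eq_union]; exact measure_union_le _ _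
    _ = 0 := by rw [Measure.prod_prod, Measure.prod_prod, hs, ht]; simp

namespace CEX
variable {ε : ℝ}

lemma measurable_interp_map :
    Measurable (fun p : ℝ × ℝ × ℝ => p.1 * p.2.1 + (1 - p.1) * p.2.2) := by
  fun_prop

instance : IsProbabilityMeasure (volume.restrict (Icc (0:ℝ) 1)) :=
  ⟨by simp [Real.volume_Icc]⟩

lemma prob_nu (hε : 0 < ε) : IsProbabilityMeasure (volume.withDensity (fd ε)) :=
  ⟨by rw [withDensity_apply _ MeasurableSet.univ, Measure.restrict_univ, lintegral_fd hε]⟩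

lemma interp_compl_zero (hε : 0 < ε) :
    (interp (volume.withDensity (fd ε))) (Icc 0 ε)ᶜ = 0 := by
  haveI := prob_nu hε
  set ν := volume.withDensity (fd ε)
  rw [interp, Measure.map_apply measurable_interp_map measurableSet_Icc.compl]
  refine measure_mono_null ?_
    (prod_compl_prod_zero (volume.restrict (Icc (0:ℝ) 1)) (ν.prod ν)
      (s := Icc (0:ℝ) 1) (t := Icc 0 ε ×ˢ Icc 0 ε) ?_ ?_)
  · intro p hp
    simp only [mem_preimage, mem_compl_iff] at hp ⊢
    intro hmem
    apply hp
    obtain ⟨hl, hxy⟩ := hmem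
    obtain ⟨hx, hy⟩ := hxy
    constructor
    · nlinarith [hl.1, hl.2, hx.1, hx.2, hy.1, hy.2]
    · nlinarith [hl.1, hl.2, hx.1, hx.2, hy.1, hy.2]
  · rw [Measure.restrict_apply measurableSet_Icc.compl]
    simp
  · exact prod_compl_prod_zero ν ν (nu_compl_zero hε) (nu_compl_zero hε)

lemma W2sq_le (hε : 0 < ε) :
    W2sq (interp (volume.withDensity (fd ε))) (volume.withDensity (fd ε))
      ≤ ENNReal.ofReal (ε ^ 2) := by
  haveI := prob_nu hε
  set ν := volume.withDensity (fd ε) with hν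
  haveI : IsProbabilityMeasure (interp ν) := by
    rw [interp]; exact Measure.isProbabilityMeasure_map measurable_interp_map.aemeasurable
  set π := (interp ν).prod ν with hπ
  have h1 : π.map Prod.fst = interp ν := by
    rw [hπ, Measure.map_fst_prod, measure_univ, one_smul]
  have h2 : π.map Prod.snd = ν := by
    rw [hπ, Measure.map_snd_prod, measure_univ, one_smul]
  have hcompl : π ((Icc 0 ε ×ˢ Icc 0 ε)ᶜ) = 0 :=
    prod_compl_prod_zero _ _ (interp_compl_zero hε) (nu_compl_zero hε)
  have hae : ∀ᵐ p ∂π, p ∈ Icc 0 ε ×ˢ Icc 0 ε := by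
    rw [ae_iff]
    exact hcompl
  have hcost : ∫⁻ p, (‖p.1 - p.2‖₊ : ℝ≥0∞) ^ 2 ∂π ≤ ENNReal.ofReal (ε ^ 2) := by
    calc ∫⁻ p, (‖p.1 - p.2‖₊ : ℝ≥0∞) ^ 2 ∂π
        ≤ ∫⁻ _, ENNReal.ofReal (ε ^ 2) ∂π := by
          refine lintegral_mono_ae ?_
          filter_upwards [hae] with p hp
          obtain ⟨hx, hy⟩ := hp
          have habs : |p.1 - p.2| ≤ ε :=
            abs_le.2 ⟨by linarith [hx.1, hx.2, hy.1, hy.2], by linarith [hx.1, hx.2, hy.1, hy.2]⟩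
          calc (‖p.1 - p.2‖₊ : ℝ≥0∞) ^ 2 = ENNReal.ofReal (|p.1 - p.2| ^ 2) := by
                rw [← enorm_eq_nnnorm, Real.enorm_eq_ofReal_abs, ← ENNReal.ofReal_pow (abs_nonneg _)]
            _ ≤ ENNReal.ofReal (ε ^ 2) :=
                ENNReal.ofReal_le_ofReal (by nlinarith [abs_nonneg (p.1 - p.2)])
      _ = ENNReal.ofReal (ε ^ 2) := by rw [lintegral_const, measure_univ, mul_one]
  exact le_trans (iInf_le_of_le π (iInf_le_of_le h1 (iInf_le_of_le h2 le_rfl))) hcost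

end CEX

/-- there is no function `a : (1,∞) → (0,∞)` such that
`W₂²(ν^int, ν) ≥ a(𝔯(ν))·(1 − 1/𝔯(ν))` for every compactly supported absolutely
continuous probability measure `ν` on `ℝ` with convex support and density ratio
`𝔯(ν) ∈ (1,∞)`. -/
theorem no_scale_free_W2_lower_bound_from_density_ratio :
    ¬ ∃ a : ℝ → ℝ, (∀ r : ℝ, 1 < r → 0 < a r) ∧
      ∀ (f : ℝ → ℝ≥0∞) (ν : Measure ℝ) (r : ℝ),
        ν = volume.withDensity f → IsProbabilityMeasure ν →
        IsCompact (msupport ν) → Convex ℝ (msupport ν) →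
        1 < r → densRatio f (msupport ν) = ENNReal.ofReal r →
        ENNReal.ofReal (a r * (1 - 1 / r)) ≤ W2sq (interp ν) ν := by
  rintro ⟨a, ha, H⟩
  have hc : 0 < a 2 := ha 2 one_lt_two
  set ε : ℝ := min 1 (Real.sqrt (a 2)) / 2 with hεdef
  have hε : 0 < ε :=
    div_pos (lt_min one_pos (Real.sqrt_pos.2 hc)) two_pos
  haveI hprob := CEX.prob_nu hε
  have hsupp : msupport (volume.withDensity (CEX.fd ε)) = Icc 0 ε := CEX.msupport_nu hε
  have H2 := H (CEX.fd ε) (volume.withDensity (CEX.fd ε)) 2 rfl hprob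
    (by rw [hsupp]; exact isCompact_Icc)
    (by rw [hsupp]; exact convex_Icc 0 ε) one_lt_two
    (by rw [hsupp]; exact CEX.densRatio_fd hε)
  have H3 := le_trans H2 (CEX.W2sq_le hε)
  rw [ENNReal.ofReal_le_ofReal_iff (by positivity)] at H3
  have h1 : ε ≤ Real.sqrt (a 2) / 2 := by
    rw [hεdef]; gcongr; exact min_le_right _ _
  have h2 : ε ^ 2 ≤ a 2 / 4 := by
    nlinarith [Real.sq_sqrt hc.le, Real.sqrt_nonneg (a 2), hε.le]
  norm_num at H3
  linarith
end
end

section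
/- There is no function b : [1,∞) → [0,∞) with lim_{C→1⁺} b(C) = 0 such that W₂(ν^int, ν) ≤ b(𝔯(ν))·diam(supp ν) holds for every compactly supported probability measure ν on ℝ that is absolutely continuous with respect to Lebesgue measure, has convex support, and has finite density ratio 𝔯(ν). (For the measure on [0,1] with density g_R(x) = (2/(R+1))(1 + (R−1)x) one has variance σ² = (R²+4R+1)/(18(R+1)²), hence W₂²(ν^int, ν) ≥ (1−√(2/3))²·(R²+4R+1)/(18(R+1)²), which stays bounded away from 0 as R ↓ 1 while 𝔯 = R → 1 and the diameter equals 1.) -/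
open MeasureTheory Metric Set
open scoped ENNReal NNReal

noncomputable section

namespace NoVanish

def c1 (r : ℝ) : ℝ := 2 / (1 + r)
def c2 (r : ℝ) : ℝ := 2 * r / (1 + r)
def fdens (r : ℝ) : ℝ → ℝ≥0∞ := fun x =>
  (Ioc (0:ℝ) (1/2)).indicator (fun _ => ENNReal.ofReal (c1 r)) x
  + (Ioc (1/2:ℝ) 1).indicator (fun _ => ENNReal.ofReal (c2 r)) x
def nu (r : ℝ) : Measure ℝ := volume.withDensity (fdens r)

lemma fdens_meas (r : ℝ) : Measurable (fdens r) := by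
  apply Measurable.add <;>
    exact (measurable_const.indicator measurableSet_Ioc)

lemma nu_apply (r : ℝ) {S : Set ℝ} (hS : MeasurableSet S) :
    nu r S = ENNReal.ofReal (c1 r) * volume (S ∩ Ioc (0:ℝ) (1/2))
      + ENNReal.ofReal (c2 r) * volume (S ∩ Ioc (1/2:ℝ) 1) := by
  rw [nu, withDensity_apply _ hS]
  simp only [fdens]
  rw [lintegral_add_left ((measurable_const.indicator measurableSet_Ioc))]
  rw [lintegral_indicator measurableSet_Ioc, lintegral_indicator measurableSet_Ioc]
  simp [Measure.restrict_restrict, measurableSet_Ioc, inter_comm]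

end NoVanish
namespace NoVanish
variable {r : ℝ}

lemma c1_pos (hr : 1 ≤ r) : 0 < c1 r := by
  have : 0 < 1 + r := by linarith
  exact div_pos (by norm_num) this

lemma c2_pos (hr : 1 ≤ r) : 0 < c2 r := by
  have : 0 < 1 + r := by linarith
  exact div_pos (by linarith) this

lemma c1_le_c2 (hr : 1 ≤ r) : c1 r ≤ c2 r := by
  have : 0 < 1 + r := by linarith
  rw [c1, c2, div_le_div_iff₀ this this]; nlinarith

lemma c1_ge (hr : 1 ≤ r) (hr2 : r ≤ 101/100) : 200/201 ≤ c1 r := by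
  have : 0 < 1 + r := by linarith
  rw [c1, le_div_iff₀ this]; linarith

lemma c2_le (hr : 1 ≤ r) (hr2 : r ≤ 101/100) : c2 r ≤ 202/201 := by
  have : 0 < 1 + r := by linarith
  rw [c2, div_le_iff₀ this]; linarith

lemma nu_univ (hr : 1 ≤ r) : nu r univ = 1 := by
  rw [nu_apply r MeasurableSet.univ]
  simp only [univ_inter, Real.volume_Ioc]
  have h1 : 0 < 1 + r := by linarith
  rw [show (1/2 - 0 : ℝ) = 1/2 by norm_num, show (1 - 1/2:ℝ) = 1/2 by norm_num,
    ← ENNReal.ofReal_mul (c1_pos hr).le, ← ENNReal.ofReal_mul (c2_pos hr).le,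
    ← ENNReal.ofReal_add (mul_nonneg (c1_pos hr).le (by norm_num))
      (mul_nonneg (c2_pos hr).le (by norm_num)),
    show c1 r * (1/2) + c2 r * (1/2) = 1 by rw [c1, c2]; field_simp]
  exact ENNReal.ofReal_one

lemma nu_prob (hr : 1 ≤ r) : IsProbabilityMeasure (nu r) := ⟨nu_univ hr⟩

lemma nu_neg : nu r (Iio 0) = 0 := by
  rw [nu_apply r measurableSet_Iio]
  have h1 : Iio (0:ℝ) ∩ Ioc 0 (1/2) = ∅ := by
    ext x; simp only [mem_inter_iff, mem_Iio, mem_Ioc, mem_empty_iff_false, iff_false]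
    rintro ⟨h, h', _⟩; linarith
  have h2 : Iio (0:ℝ) ∩ Ioc (1/2) 1 = ∅ := by
    ext x; simp only [mem_inter_iff, mem_Iio, mem_Ioc, mem_empty_iff_false, iff_false]
    rintro ⟨h, h', _⟩; linarith
  rw [h1, h2]; simp

lemma nu_gt_one : nu r (Ioi 1) = 0 := by
  rw [nu_apply r measurableSet_Ioi]
  have h1 : Ioi (1:ℝ) ∩ Ioc 0 (1/2) = ∅ := by
    ext x; simp only [mem_inter_iff, mem_Ioi, mem_Ioc, mem_empty_iff_false, iff_false]
    rintro ⟨h, h', h''⟩; linarith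
  have h2 : Ioi (1:ℝ) ∩ Ioc (1/2) 1 = ∅ := by
    ext x; simp only [mem_inter_iff, mem_Ioi, mem_Ioc, mem_empty_iff_false, iff_false]
    rintro ⟨h, h', h''⟩; linarith
  rw [h1, h2]; simp

lemma nu_Iic_le (hr : 1 ≤ r) (hr2 : r ≤ 101/100) {u : ℝ} (hu : 0 ≤ u) :
    nu r (Iic u) ≤ ENNReal.ofReal (202/201 * u) := by
  rw [nu_apply r measurableSet_Iic]
  have C2 := c2_le hr hr2
  have C1 : c1 r ≤ 202/201 := (c1_le_c2 hr).trans C2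
  have hABm : volume (Iic u ∩ Ioc (0:ℝ) (1/2)) + volume (Iic u ∩ Ioc (1/2:ℝ) 1)
      ≤ ENNReal.ofReal u := by
    rw [← measure_union (by
      apply Set.disjoint_left.2; rintro x ⟨_, _, h2⟩ ⟨_, h3, _⟩; linarith)
      (measurableSet_Iic.inter measurableSet_Ioc)]
    refine le_trans (measure_mono (show _ ⊆ Ioc (0:ℝ) u from ?_)) ?_
    · exact fun x hx => show x ∈ Ioc (0:ℝ) u by
        rcases hx with ⟨hx1, hx2⟩ | ⟨hx1, hx2⟩
        · exact ⟨hx2.1, hx1⟩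
        · exact ⟨by linarith [hx2.1], hx1⟩
    · rw [Real.volume_Ioc]; exact ENNReal.ofReal_le_ofReal (by linarith)
  calc ENNReal.ofReal (c1 r) * volume (Iic u ∩ Ioc (0:ℝ) (1/2))
      + ENNReal.ofReal (c2 r) * volume (Iic u ∩ Ioc (1/2:ℝ) 1)
      ≤ ENNReal.ofReal (202/201) * volume (Iic u ∩ Ioc (0:ℝ) (1/2))
      + ENNReal.ofReal (202/201) * volume (Iic u ∩ Ioc (1/2:ℝ) 1) := by
        gcongr <;> exact ENNReal.ofReal_le_ofReal (by assumption)
    _ = ENNReal.ofReal (202/201) * (volume (Iic u ∩ Ioc (0:ℝ) (1/2))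
        + volume (Iic u ∩ Ioc (1/2:ℝ) 1)) := by ring
    _ ≤ ENNReal.ofReal (202/201) * ENNReal.ofReal u := by gcongr
    _ = ENNReal.ofReal (202/201 * u) := by
        rw [ENNReal.ofReal_mul (by norm_num)]

lemma nu_Iic_t (hr : 1 ≤ r) (hr2 : r ≤ 101/100) :
    ENNReal.ofReal (25/1608) ≤ nu r (Iic (1/64)) := by
  rw [nu_apply r measurableSet_Iic]
  have h1 : Iic (1/64:ℝ) ∩ Ioc 0 (1/2) = Ioc (0:ℝ) (1/64) := by
    ext x; simp only [mem_inter_iff, mem_Iic, mem_Ioc]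
    constructor
    · rintro ⟨h, h1, h2⟩; exact ⟨h1, h⟩
    · rintro ⟨h1, h2⟩; exact ⟨h2, h1, by linarith⟩
  rw [h1, Real.volume_Ioc]
  refine le_trans ?_ le_self_add
  rw [← ENNReal.ofReal_mul (c1_pos hr).le]
  apply ENNReal.ofReal_le_ofReal
  have := c1_ge hr hr2
  nlinarith

end NoVanish
namespace NoVanish
variable {r : ℝ}

lemma nu_Ioo_pos (hr : 1 ≤ r) {a b : ℝ} (hab : a < b) (hb : 0 < b) (ha : a < 1) :
    0 < nu r (Ioo a b) := by
  rw [nu_apply r measurableSet_Ioo]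
  set m : ℝ := max a 0 with hm
  set M : ℝ := min b 1 with hM
  have hmM : m < M := max_lt (lt_min hab ha) (lt_min hb (by norm_num))
  rcases lt_or_ge m (1/2) with hc | hc
  · have hsub : Ioo m (min M (1/2)) ⊆ Ioo a b ∩ Ioc 0 (1/2) := by
      rintro x ⟨h1, h2⟩
      rw [lt_min_iff] at h2
      refine ⟨⟨lt_of_le_of_lt (le_max_left a 0) h1, lt_of_lt_of_le h2.1 (min_le_left b 1)⟩,
        lt_of_le_of_lt (le_max_right a 0) h1, h2.2.le⟩
    have hpos : 0 < volume (Ioo a b ∩ Ioc (0:ℝ) (1/2)) := by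
      refine lt_of_lt_of_le ?_ (measure_mono hsub)
      rw [Real.volume_Ioo, ENNReal.ofReal_pos]
      exact sub_pos.2 (lt_min hmM hc)
    have : 0 < ENNReal.ofReal (c1 r) * volume (Ioo a b ∩ Ioc (0:ℝ) (1/2)) :=
      ENNReal.mul_pos (ENNReal.ofReal_pos.2 (c1_pos hr)).ne' hpos.ne'
    exact lt_of_lt_of_le this le_self_add
  · have hsub : Ioo m M ⊆ Ioo a b ∩ Ioc (1/2) 1 := by
      rintro x ⟨h1, h2⟩
      exact ⟨⟨lt_of_le_of_lt (le_max_left a 0) h1, lt_of_lt_of_le h2 (min_le_left b 1)⟩,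
        lt_of_le_of_lt hc h1, (lt_of_lt_of_le h2 (min_le_right b 1)).le⟩
    have hpos : 0 < volume (Ioo a b ∩ Ioc (1/2:ℝ) 1) := by
      refine lt_of_lt_of_le ?_ (measure_mono hsub)
      rw [Real.volume_Ioo, ENNReal.ofReal_pos]
      exact sub_pos.2 hmM
    have : 0 < ENNReal.ofReal (c2 r) * volume (Ioo a b ∩ Ioc (1/2:ℝ) 1) :=
      ENNReal.mul_pos (ENNReal.ofReal_pos.2 (c2_pos hr)).ne' hpos.ne'
    exact lt_of_lt_of_le this le_add_self

lemma msupport_eq (hr : 1 ≤ r) : msupport (nu r) = Icc 0 1 := by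
  ext x
  simp only [msupport, mem_setOf_eq, mem_Icc]
  constructor
  · intro h
    by_contra hx
    push_neg at hx
    rcases lt_or_ge x 0 with h0 | h0
    · have := h (Iio 0) (Iio_mem_nhds h0)
      rw [nu_neg] at this; exact lt_irrefl 0 this
    · have h1 : 1 < x := hx h0
      have := h (Ioi 1) (Ioi_mem_nhds h1)
      rw [nu_gt_one] at this; exact lt_irrefl 0 this
  · rintro ⟨h0, h1⟩ U hU
    rcases Metric.mem_nhds_iff.1 hU with ⟨ε, hε, hball⟩
    have hsub : Ioo (x - ε) (x + ε) ⊆ U := by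
      intro y hy
      apply hball
      rw [Metric.mem_ball, Real.dist_eq, abs_lt]
      exact ⟨by linarith [hy.1], by linarith [hy.2]⟩
    refine lt_of_lt_of_le (lt_of_lt_of_le ?_ (measure_mono hsub)) le_rfl
    exact nu_Ioo_pos hr (by linarith) (by linarith) (by linarith)

lemma msupport_compact (hr : 1 ≤ r) : IsCompact (msupport (nu r)) := by
  rw [msupport_eq hr]; exact isCompact_Icc

lemma msupport_convex (hr : 1 ≤ r) : Convex ℝ (msupport (nu r)) := by
  rw [msupport_eq hr]; exact convex_Icc 0 1

lemma msupport_diam (hr : 1 ≤ r) : diam (msupport (nu r)) = 1 := by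
  rw [msupport_eq hr, Real.diam_Icc (by norm_num : (0:ℝ) ≤ 1)]; norm_num

end NoVanish
namespace NoVanish
variable {r : ℝ}

lemma fdens_lo {x : ℝ} (hx : x ∈ Ioc (0:ℝ) (1/2)) : fdens r x = ENNReal.ofReal (c1 r) := by
  have hx2 : x ∉ Ioc (1/2:ℝ) 1 := fun h => absurd hx.2 (not_le.2 h.1)
  simp only [fdens]
  rw [indicator_of_mem hx, indicator_of_notMem hx2, add_zero]

lemma fdens_hi {x : ℝ} (hx : x ∈ Ioc (1/2:ℝ) 1) : fdens r x = ENNReal.ofReal (c2 r) := by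
  have hx2 : x ∉ Ioc (0:ℝ) (1/2) := fun h => absurd h.2 (not_le.2 hx.1)
  simp only [fdens]
  rw [indicator_of_mem hx, indicator_of_notMem hx2, zero_add]

lemma fdens_le (hr : 1 ≤ r) (x : ℝ) : fdens r x ≤ ENNReal.ofReal (c2 r) := by
  rcases em (x ∈ Ioc (0:ℝ) (1/2)) with h | h
  · rw [fdens_lo h]; exact ENNReal.ofReal_le_ofReal (c1_le_c2 hr)
  rcases em (x ∈ Ioc (1/2:ℝ) 1) with h' | h'
  · rw [fdens_hi h']
  · simp only [fdens]
    rw [indicator_of_notMem h, indicator_of_notMem h', add_zero]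
    exact zero_le

lemma restrict_compl_Ioc : (volume.restrict (Icc (0:ℝ) 1)) ((Ioc (0:ℝ) 1)ᶜ) = 0 := by
  rw [Measure.restrict_apply measurableSet_Ioc.compl]
  have : (Ioc (0:ℝ) 1)ᶜ ∩ Icc 0 1 = {0} := by
    ext x
    simp only [mem_inter_iff, mem_compl_iff, mem_Ioc, mem_Icc, mem_singleton_iff, not_and,
      not_le]
    constructor
    · rintro ⟨h, h0, h1⟩
      by_contra hx
      have : 0 < x := lt_of_le_of_ne h0 (Ne.symm hx)
      linarith [h this]
    · rintro rfl; exact ⟨fun h => absurd h (lt_irrefl 0), le_rfl, by norm_num⟩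
  rw [this]; exact Real.volume_singleton

lemma ae_mem_Ioc : ∀ᵐ x ∂(volume.restrict (Icc (0:ℝ) 1)), x ∈ Ioc (0:ℝ) 1 := by
  rw [MeasureTheory.ae_iff]
  exact restrict_compl_Ioc

lemma essSup_fdens (hr : 1 ≤ r) :
    essSup (fdens r) (volume.restrict (Icc (0:ℝ) 1)) = ENNReal.ofReal (c2 r) := by
  refine le_antisymm (essSup_le_of_ae_le _ (Filter.Eventually.of_forall (fdens_le hr))) ?_
  by_contra h
  push_neg at h
  have hae := ENNReal.ae_le_essSup (μ := volume.restrict (Icc (0:ℝ) 1)) (fdens r)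
  have hnull : (volume.restrict (Icc (0:ℝ) 1))
      {x | ¬ fdens r x ≤ essSup (fdens r) (volume.restrict (Icc (0:ℝ) 1))} = 0 :=
    MeasureTheory.ae_iff.1 hae
  have hsub : Ioc (1/2:ℝ) 1 ⊆
      {x | ¬ fdens r x ≤ essSup (fdens r) (volume.restrict (Icc (0:ℝ) 1))} := by
    intro x hx
    simp only [mem_setOf_eq, not_le, fdens_hi hx]
    exact h
  have : (volume.restrict (Icc (0:ℝ) 1)) (Ioc (1/2:ℝ) 1) = 0 :=
    measure_mono_null hsub hnull
  rw [Measure.restrict_apply measurableSet_Ioc] at this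
  have heq : Ioc (1/2:ℝ) 1 ∩ Icc 0 1 = Ioc (1/2:ℝ) 1 := by
    apply inter_eq_self_of_subset_left
    intro x hx; exact ⟨by linarith [hx.1], hx.2⟩
  rw [heq, Real.volume_Ioc] at this
  simp only [ENNReal.ofReal_eq_zero] at this
  linarith

lemma essInf_fdens (hr : 1 ≤ r) :
    essInf (fdens r) (volume.restrict (Icc (0:ℝ) 1)) = ENNReal.ofReal (c1 r) := by
  refine le_antisymm ?_ ?_
  · by_contra h
    push_neg at h
    have hae := ae_essInf_le (f := fdens r) (μ := volume.restrict (Icc (0:ℝ) 1))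
    have hnull : (volume.restrict (Icc (0:ℝ) 1))
        {x | ¬ essInf (fdens r) (volume.restrict (Icc (0:ℝ) 1)) ≤ fdens r x} = 0 :=
      MeasureTheory.ae_iff.1 hae
    have hsub : Ioc (0:ℝ) (1/2) ⊆
        {x | ¬ essInf (fdens r) (volume.restrict (Icc (0:ℝ) 1)) ≤ fdens r x} := by
      intro x hx
      simp only [mem_setOf_eq, not_le, fdens_lo hx]
      exact h
    have : (volume.restrict (Icc (0:ℝ) 1)) (Ioc (0:ℝ) (1/2)) = 0 :=
      measure_mono_null hsub hnull
    rw [Measure.restrict_apply measurableSet_Ioc] at this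
    have heq : Ioc (0:ℝ) (1/2) ∩ Icc 0 1 = Ioc (0:ℝ) (1/2) := by
      apply inter_eq_self_of_subset_left
      intro x hx; exact ⟨hx.1.le, by linarith [hx.2]⟩
    rw [heq, Real.volume_Ioc] at this
    simp only [ENNReal.ofReal_eq_zero] at this
    linarith
  · refine le_essInf_of_ae_le _ (ae_mem_Ioc.mono fun x hx => ?_)
    rcases le_or_gt x (1/2) with h | h
    · rw [fdens_lo ⟨hx.1, h⟩]
    · rw [fdens_hi ⟨h, hx.2⟩]; exact ENNReal.ofReal_le_ofReal (c1_le_c2 hr)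

lemma densRatio_eq (hr : 1 ≤ r) : densRatio (fdens r) (msupport (nu r)) = ENNReal.ofReal r := by
  rw [densRatio, msupport_eq hr, essSup_fdens hr, essInf_fdens hr,
    ← ENNReal.ofReal_div_of_pos (c1_pos hr)]
  congr 1
  rw [c1, c2]
  have : (1:ℝ) + r ≠ 0 := by positivity
  field_simp

end NoVanish
namespace NoVanish
variable {r : ℝ}

lemma slice_le_one (hr : 1 ≤ r) (S : Set ℝ) : nu r S ≤ 1 := by
  haveI := nu_prob hr
  exact prob_le_one

lemma nu_slice_le (hr : 1 ≤ r) (hr2 : r ≤ 101/100) {lam a : ℝ} (ha : 0 < a)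
    (hla : a ≤ lam) {c : ℝ} (hc : 202/201 * (5/256/a) ≤ c) :
    nu r {x | lam * x ≤ 5/256} ≤ ENNReal.ofReal c := by
  have hlam : 0 < lam := lt_of_lt_of_le ha hla
  have hsub : {x | lam * x ≤ 5/256} ⊆ Iic (5/256/a) := by
    intro x hx
    simp only [mem_setOf_eq] at hx
    rw [mem_Iic]
    have h1 : x ≤ 5/256/lam := by
      rw [le_div_iff₀ hlam, mul_comm]; exact hx
    exact h1.trans (div_le_div_of_nonneg_left (by norm_num) ha hla)
  calc nu r {x | lam * x ≤ 5/256} ≤ nu r (Iic (5/256/a)) := by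
        refine measure_mono hsub
    _ ≤ ENNReal.ofReal (202/201 * (5/256/a)) := nu_Iic_le hr hr2 (by positivity)
    _ ≤ ENNReal.ofReal c := ENNReal.ofReal_le_ofReal hc

lemma block_bound (hr : 1 ≤ r) {a b : ℝ} (hab : a ≤ b) {c q : ℝ}
    (hg : ∀ lam ∈ Icc a b, nu r {x | lam * x ≤ 5/256} * nu r {y | (1-lam) * y ≤ 5/256}
      ≤ ENNReal.ofReal c)
    (hq : c * (b - a) ≤ q) (hc : 0 ≤ c) :
    ∫⁻ lam in Icc a b, nu r {x | lam * x ≤ 5/256} * nu r {y | (1-lam) * y ≤ 5/256} ∂volume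
      ≤ ENNReal.ofReal q := by
  calc ∫⁻ lam in Icc a b, nu r {x | lam * x ≤ 5/256} * nu r {y | (1-lam) * y ≤ 5/256} ∂volume
      ≤ ∫⁻ _ in Icc a b, ENNReal.ofReal c ∂volume := by
        refine setLIntegral_mono' measurableSet_Icc hg
    _ = ENNReal.ofReal c * volume (Icc a b) := setLIntegral_const _ _
    _ = ENNReal.ofReal c * ENNReal.ofReal (b - a) := by rw [Real.volume_Icc]
    _ = ENNReal.ofReal (c * (b - a)) := (ENNReal.ofReal_mul hc).symm
    _ ≤ ENNReal.ofReal q := ENNReal.ofReal_le_ofReal hq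

end NoVanish
namespace NoVanish
variable {r : ℝ}

lemma interp_Iic_le (hr : 1 ≤ r) (hr2 : r ≤ 101/100) :
    interp (nu r) (Iic (5/256 : ℝ)) ≤ ENNReal.ofReal (3/500) := by
  haveI := nu_prob hr
  set ν := nu r
  set μΛ := volume.restrict (Icc (0:ℝ) 1) with hμΛ
  have hφ : Measurable (fun p : ℝ × (ℝ × ℝ) => p.1 * p.2.1 + (1 - p.1) * p.2.2) := by
    fun_prop
  rw [interp, Measure.map_apply hφ measurableSet_Iic]
  set A : Set (ℝ × (ℝ × ℝ)) := {p | p.1 * p.2.1 ≤ 5/256 ∧ (1 - p.1) * p.2.2 ≤ 5/256} with hA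
  have hAm : MeasurableSet A := by
    have h1 : Measurable fun p : ℝ × (ℝ × ℝ) => p.1 * p.2.1 := by fun_prop
    have h2 : Measurable fun p : ℝ × (ℝ × ℝ) => (1 - p.1) * p.2.2 := by fun_prop
    exact (h1 measurableSet_Iic).inter (h2 measurableSet_Iic)
  set N0 : Set (ℝ × (ℝ × ℝ)) := (Icc (0:ℝ) 1)ᶜ ×ˢ (univ : Set (ℝ × ℝ)) with hN0
  set N1 : Set (ℝ × (ℝ × ℝ)) := (univ : Set ℝ) ×ˢ ((Iio (0:ℝ)) ×ˢ (univ : Set ℝ)) with hN1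
  set N2 : Set (ℝ × (ℝ × ℝ)) := (univ : Set ℝ) ×ˢ ((univ : Set ℝ) ×ˢ (Iio (0:ℝ))) with hN2
  have hsub : (fun p : ℝ × (ℝ × ℝ) => p.1 * p.2.1 + (1 - p.1) * p.2.2) ⁻¹' Iic (5/256)
      ⊆ A ∪ (N0 ∪ (N1 ∪ N2)) := by
    intro p hp
    simp only [mem_preimage, mem_Iic] at hp
    by_cases h0 : p.1 ∈ Icc (0:ℝ) 1
    · by_cases h1 : 0 ≤ p.2.1
      · by_cases h2 : 0 ≤ p.2.2
        · left
          constructor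
          · nlinarith [h0.1, h0.2, mul_nonneg (sub_nonneg.2 h0.2) h2]
          · nlinarith [h0.1, h0.2, mul_nonneg h0.1 h1]
        · right; right; right; exact ⟨trivial, trivial, not_le.1 h2⟩
      · right; right; left; exact ⟨trivial, not_le.1 h1, trivial⟩
    · right; left; exact ⟨h0, trivial⟩
  have hP0 : (μΛ.prod (ν.prod ν)) N0 = 0 := by
    rw [hN0, Measure.prod_prod, hμΛ, Measure.restrict_apply measurableSet_Icc.compl]
    simp
  have hP1 : (μΛ.prod (ν.prod ν)) N1 = 0 := by
    rw [hN1, Measure.prod_prod, Measure.prod_prod]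
    simp only [show ν (Iio 0) = 0 from nu_neg]
    simp
  have hP2 : (μΛ.prod (ν.prod ν)) N2 = 0 := by
    rw [hN2, Measure.prod_prod, Measure.prod_prod]
    simp only [show ν (Iio 0) = 0 from nu_neg]
    simp
  calc (μΛ.prod (ν.prod ν))
        ((fun p : ℝ × (ℝ × ℝ) => p.1 * p.2.1 + (1 - p.1) * p.2.2) ⁻¹' Iic (5/256))
      ≤ (μΛ.prod (ν.prod ν)) (A ∪ (N0 ∪ (N1 ∪ N2))) := measure_mono hsub
    _ ≤ (μΛ.prod (ν.prod ν)) A + ((μΛ.prod (ν.prod ν)) N0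
        + ((μΛ.prod (ν.prod ν)) N1 + (μΛ.prod (ν.prod ν)) N2)) := by
        refine (measure_union_le _ _).trans ?_
        gcongr
        refine (measure_union_le _ _).trans ?_
        gcongr
        exact measure_union_le _ _
    _ = (μΛ.prod (ν.prod ν)) A := by rw [hP0, hP1, hP2]; simp
    _ ≤ ENNReal.ofReal (3/500) := ?_
  rw [Measure.prod_apply hAm]
  have hsl : ∀ lam : ℝ, (ν.prod ν) (Prod.mk lam ⁻¹' A)
      = ν {x | lam * x ≤ 5/256} * ν {y | (1-lam) * y ≤ 5/256} := by
    intro lam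
    have : Prod.mk lam ⁻¹' A = {x | lam * x ≤ 5/256} ×ˢ {y | (1-lam) * y ≤ 5/256} := rfl
    rw [this, Measure.prod_prod]
  simp only [hsl]
  have hcover : Icc (0:ℝ) 1 ⊆ Icc (0:ℝ) (1/25) ∪ (Icc (1/25:ℝ) (2/25) ∪ (Icc (2/25:ℝ) (4/25)
      ∪ (Icc (4/25:ℝ) (1/4) ∪ (Icc (1/4:ℝ) (1/2) ∪ (Icc (1/2:ℝ) (3/4) ∪ (Icc (3/4:ℝ) (21/25)
      ∪ (Icc (21/25:ℝ) (23/25) ∪ (Icc (23/25:ℝ) (24/25) ∪ Icc (24/25:ℝ) 1)))))))) := by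
    intro x hx
    simp only [mem_union, mem_Icc]
    rcases le_or_gt x (1/25) with h | h; · exact Or.inl ⟨hx.1, h⟩
    rcases le_or_gt x (2/25) with h' | h'; · exact Or.inr (Or.inl ⟨h.le, h'⟩)
    rcases le_or_gt x (4/25) with h'' | h''; · exact Or.inr (Or.inr (Or.inl ⟨h'.le, h''⟩))
    rcases le_or_gt x (1/4) with h3 | h3
    · exact Or.inr (Or.inr (Or.inr (Or.inl ⟨h''.le, h3⟩)))
    rcases le_or_gt x (1/2) with h4 | h4
    · exact Or.inr (Or.inr (Or.inr (Or.inr (Or.inl ⟨h3.le, h4⟩))))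
    rcases le_or_gt x (3/4) with h5 | h5
    · exact Or.inr (Or.inr (Or.inr (Or.inr (Or.inr (Or.inl ⟨h4.le, h5⟩)))))
    rcases le_or_gt x (21/25) with h6 | h6
    · exact Or.inr (Or.inr (Or.inr (Or.inr (Or.inr (Or.inr (Or.inl ⟨h5.le, h6⟩))))))
    rcases le_or_gt x (23/25) with h7 | h7
    · exact Or.inr (Or.inr (Or.inr (Or.inr (Or.inr (Or.inr (Or.inr (Or.inl ⟨h6.le, h7⟩)))))))
    rcases le_or_gt x (24/25) with h8 | h8
    · exact Or.inr (Or.inr (Or.inr (Or.inr (Or.inr (Or.inr (Or.inr (Or.inr (Or.inl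
        ⟨h7.le, h8⟩))))))))
    · exact Or.inr (Or.inr (Or.inr (Or.inr (Or.inr (Or.inr (Or.inr (Or.inr (Or.inr
        ⟨h8.le, hx.2⟩))))))))
  refine le_trans (lintegral_mono_set hcover) ?_
  have step : ∀ (s t : Set ℝ) (g : ℝ → ℝ≥0∞),
      ∫⁻ lam in s ∪ t, g lam ∂volume ≤ ∫⁻ lam in s, g lam ∂volume
        + ∫⁻ lam in t, g lam ∂volume := fun s t g => lintegral_union_le _ _ _
  -- bound each block
  have hB1 : ∫⁻ lam in Icc (0:ℝ) (1/25),
      ν {x | lam * x ≤ 5/256} * ν {y | (1-lam) * y ≤ 5/256} ∂volume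
      ≤ ENNReal.ofReal (1/1200) := by
    refine block_bound hr (c := 1/48) (q := 1/1200) (by norm_num) (fun lam hlam => ?_) (by norm_num) (by norm_num)
    calc ν {x | lam * x ≤ 5/256} * ν {y | (1-lam) * y ≤ 5/256}
        ≤ 1 * ENNReal.ofReal (1/48) := by
          refine mul_le_mul' (slice_le_one hr _) ?_
          refine nu_slice_le hr hr2 (a := 24/25) (by norm_num) (by linarith [hlam.2])
            (by norm_num)
      _ = ENNReal.ofReal (1/48) := one_mul _
  have hB10 : ∫⁻ lam in Icc (24/25:ℝ) 1,
      ν {x | lam * x ≤ 5/256} * ν {y | (1-lam) * y ≤ 5/256} ∂volume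
      ≤ ENNReal.ofReal (1/1200) := by
    refine block_bound hr (c := 1/48) (q := 1/1200) (by norm_num) (fun lam hlam => ?_) (by norm_num) (by norm_num)
    calc ν {x | lam * x ≤ 5/256} * ν {y | (1-lam) * y ≤ 5/256}
        ≤ ENNReal.ofReal (1/48) * 1 := by
          refine mul_le_mul' ?_ (slice_le_one hr _)
          refine nu_slice_le hr hr2 (a := 24/25) (by norm_num) (by linarith [hlam.1])
            (by norm_num)
      _ = ENNReal.ofReal (1/48) := mul_one _
  have hBmid : ∀ (a b p q m : ℝ), 0 < a → a ≤ b → b + q ≤ 1 → 0 < q →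
      202/201 * (5/256/a) ≤ p → 202/201 * (5/256/q) ≤ m → ∀ (z : ℝ), p * m * (b - a) ≤ z →
      ∫⁻ lam in Icc a b,
        ν {x | lam * x ≤ 5/256} * ν {y | (1-lam) * y ≤ 5/256} ∂volume
        ≤ ENNReal.ofReal z := by
    intro a b p q m ha hab hbq hq hp hm z hz
    have hp0 : 0 ≤ p := le_trans (by positivity) hp
    have hm0 : 0 ≤ m := le_trans (by positivity) hm
    refine block_bound hr (c := p * m) (q := z) hab (fun lam hlam => ?_) hz (by positivity)
    calc ν {x | lam * x ≤ 5/256} * ν {y | (1-lam) * y ≤ 5/256}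
        ≤ ENNReal.ofReal p * ENNReal.ofReal m := by
          refine mul_le_mul' (nu_slice_le hr hr2 ha hlam.1 hp)
            (nu_slice_le hr hr2 (a := q) hq (by linarith [hlam.2]) hm)
      _ = ENNReal.ofReal (p * m) := (ENNReal.ofReal_mul hp0).symm
  have hB2 := hBmid (1/25) (2/25) (1/2) (23/25) (1/46) (by norm_num) (by norm_num)
    (by norm_num) (by norm_num) (by norm_num) (by norm_num) (1/2300) (by norm_num)
  have hB3 := hBmid (2/25) (4/25) (1/4) (21/25) (1/42) (by norm_num) (by norm_num)
    (by norm_num) (by norm_num) (by norm_num) (by norm_num) (1/2100) (by norm_num)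
  have hB4 := hBmid (4/25) (1/4) (1/8) (3/4) (2/75) (by norm_num) (by norm_num)
    (by norm_num) (by norm_num) (by norm_num) (by norm_num) (3/10000) (by norm_num)
  have hB5 := hBmid (1/4) (1/2) (2/25) (1/2) (1/25) (by norm_num) (by norm_num)
    (by norm_num) (by norm_num) (by norm_num) (by norm_num) (1/1250) (by norm_num)
  have hB6 := hBmid (1/2) (3/4) (1/25) (1/4) (2/25) (by norm_num) (by norm_num)
    (by norm_num) (by norm_num) (by norm_num) (by norm_num) (1/1250) (by norm_num)
  have hB7 := hBmid (3/4) (21/25) (2/75) (4/25) (1/8) (by norm_num) (by norm_num)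
    (by norm_num) (by norm_num) (by norm_num) (by norm_num) (3/10000) (by norm_num)
  have hB8 := hBmid (21/25) (23/25) (1/42) (2/25) (1/4) (by norm_num) (by norm_num)
    (by norm_num) (by norm_num) (by norm_num) (by norm_num) (1/2100) (by norm_num)
  have hB9 := hBmid (23/25) (24/25) (1/46) (1/25) (1/2) (by norm_num) (by norm_num)
    (by norm_num) (by norm_num) (by norm_num) (by norm_num) (1/2300) (by norm_num)
  calc ∫⁻ lam in Icc (0:ℝ) (1/25) ∪ (Icc (1/25:ℝ) (2/25) ∪ (Icc (2/25:ℝ) (4/25)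
      ∪ (Icc (4/25:ℝ) (1/4) ∪ (Icc (1/4:ℝ) (1/2) ∪ (Icc (1/2:ℝ) (3/4) ∪ (Icc (3/4:ℝ) (21/25)
      ∪ (Icc (21/25:ℝ) (23/25) ∪ (Icc (23/25:ℝ) (24/25) ∪ Icc (24/25:ℝ) 1)))))))),
      ν {x | lam * x ≤ 5/256} * ν {y | (1-lam) * y ≤ 5/256} ∂volume
      ≤ ENNReal.ofReal (1/1200) + (ENNReal.ofReal (1/2300) + (ENNReal.ofReal (1/2100)
        + (ENNReal.ofReal (3/10000) + (ENNReal.ofReal (1/1250) + (ENNReal.ofReal (1/1250)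
        + (ENNReal.ofReal (3/10000) + (ENNReal.ofReal (1/2100) + (ENNReal.ofReal (1/2300)
        + ENNReal.ofReal (1/1200))))))))) := by
        refine (step _ _ _).trans (add_le_add hB1 ?_)
        refine (step _ _ _).trans (add_le_add hB2 ?_)
        refine (step _ _ _).trans (add_le_add hB3 ?_)
        refine (step _ _ _).trans (add_le_add hB4 ?_)
        refine (step _ _ _).trans (add_le_add hB5 ?_)
        refine (step _ _ _).trans (add_le_add hB6 ?_)
        refine (step _ _ _).trans (add_le_add hB7 ?_)
        refine (step _ _ _).trans (add_le_add hB8 ?_)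
        exact (step _ _ _).trans (add_le_add hB9 hB10)
    _ ≤ ENNReal.ofReal (3/500) := by
        rw [← ENNReal.ofReal_add (by norm_num) (by norm_num),
          ← ENNReal.ofReal_add (by norm_num) (by norm_num),
          ← ENNReal.ofReal_add (by norm_num) (by norm_num),
          ← ENNReal.ofReal_add (by norm_num) (by norm_num),
          ← ENNReal.ofReal_add (by norm_num) (by norm_num),
          ← ENNReal.ofReal_add (by norm_num) (by norm_num),
          ← ENNReal.ofReal_add (by norm_num) (by norm_num),
          ← ENNReal.ofReal_add (by norm_num) (by norm_num),
          ← ENNReal.ofReal_add (by norm_num) (by norm_num)]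
        exact ENNReal.ofReal_le_ofReal (by norm_num)

end NoVanish
namespace NoVanish
variable {r : ℝ}

lemma W2sq_lower (hr : 1 ≤ r) (hr2 : r ≤ 101/100) :
    ENNReal.ofReal (1/9000000) ≤ W2sq (interp (nu r)) (nu r) := by
  rw [W2sq]
  refine le_iInf fun π => le_iInf fun h1 => le_iInf fun h2 => ?_
  set E : Set (ℝ × ℝ) := (Prod.snd ⁻¹' Iic (1/64)) \ (Prod.fst ⁻¹' Iic (5/256)) with hE
  have hEm : MeasurableSet E :=
    (measurable_snd measurableSet_Iic).diff (measurable_fst measurableSet_Iic)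
  have hπE : ENNReal.ofReal (25/1608) - ENNReal.ofReal (3/500) ≤ π E := by
    refine le_trans ?_ le_measure_diff
    have hs : π (Prod.snd ⁻¹' Iic (1/64)) = nu r (Iic (1/64)) := by
      rw [← h2, Measure.map_apply measurable_snd measurableSet_Iic]
    have hf : π (Prod.fst ⁻¹' Iic (5/256)) = interp (nu r) (Iic (5/256)) := by
      rw [← h1, Measure.map_apply measurable_fst measurableSet_Iic]
    rw [hs, hf]
    exact tsub_le_tsub (nu_Iic_t hr hr2) (interp_Iic_le hr hr2)
  have hcost : ∀ p ∈ E, ENNReal.ofReal ((1/256)^2) ≤ (‖p.1 - p.2‖₊ : ℝ≥0∞) ^ 2 := by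
    rintro p ⟨hp2, hp1⟩
    simp only [mem_preimage, mem_Iic, not_le] at hp2 hp1
    have habs : (1/256 : ℝ) ≤ |p.1 - p.2| := by
      rw [le_abs]; left; linarith
    rw [← enorm_eq_nnnorm, Real.enorm_eq_ofReal_abs, ← ENNReal.ofReal_pow (abs_nonneg _)]
    exact ENNReal.ofReal_le_ofReal (by nlinarith [abs_nonneg (p.1 - p.2)])
  calc ENNReal.ofReal (1/9000000)
      ≤ ENNReal.ofReal ((1/256)^2) * (ENNReal.ofReal (25/1608) - ENNReal.ofReal (3/500)) := by
        rw [← ENNReal.ofReal_sub _ (by norm_num), ← ENNReal.ofReal_mul (by norm_num)]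
        exact ENNReal.ofReal_le_ofReal (by norm_num)
    _ ≤ ENNReal.ofReal ((1/256)^2) * π E := by gcongr
    _ = ∫⁻ _ in E, ENNReal.ofReal ((1/256)^2) ∂π := (setLIntegral_const _ _).symm
    _ ≤ ∫⁻ p in E, (‖p.1 - p.2‖₊ : ℝ≥0∞) ^ 2 ∂π := setLIntegral_mono' hEm hcost
    _ ≤ ∫⁻ p, (‖p.1 - p.2‖₊ : ℝ≥0∞) ^ 2 ∂π := setLIntegral_le_lintegral _ _

end NoVanish

/-- there is no function `b : [1,∞) → [0,∞)` with `b(C) → 0` as `C → 1⁺`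
such that `W₂(ν^int, ν) ≤ b(𝔯(ν))·diam(supp ν)` for every compactly supported absolutely
continuous probability measure `ν` on `ℝ` with convex support and finite density
ratio `𝔯(ν)`. -/
theorem no_vanishing_W2_upper_bound_from_density_ratio :
    ¬ ∃ b : ℝ → ℝ, (∀ C : ℝ, 1 ≤ C → 0 ≤ b C) ∧
      Filter.Tendsto b (nhdsWithin 1 (Ioi 1)) (nhds 0) ∧
      ∀ (f : ℝ → ℝ≥0∞) (ν : Measure ℝ) (r : ℝ),
        ν = volume.withDensity f → IsProbabilityMeasure ν →
        IsCompact (msupport ν) → Convex ℝ (msupport ν) →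
        1 ≤ r → densRatio f (msupport ν) = ENNReal.ofReal r →
        (W2sq (interp ν) ν) ^ (1/2 : ℝ)
          ≤ ENNReal.ofReal (b r * diam (msupport ν)) := by
  rintro ⟨b, hbnn, hbt, hb⟩
  have hev : ∀ᶠ x in nhdsWithin (1:ℝ) (Ioi 1), b x < 1/3000 :=
    hbt.eventually_lt_const (by norm_num)
  have hmem : Ioc (1:ℝ) (101/100) ∈ nhdsWithin (1:ℝ) (Ioi 1) :=
    Ioc_mem_nhdsGT_of_mem ⟨le_refl 1, by norm_num⟩
  obtain ⟨r, hr1, hr2⟩ := (hev.and (Filter.eventually_of_mem hmem fun x hx => hx)).exists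
  have hr : 1 ≤ r := hr2.1.le
  have key := hb (NoVanish.fdens r) (NoVanish.nu r) r rfl (NoVanish.nu_prob hr)
    (NoVanish.msupport_compact hr) (NoVanish.msupport_convex hr) hr
    (NoVanish.densRatio_eq hr)
  rw [NoVanish.msupport_diam hr, mul_one] at key
  have hlow : ENNReal.ofReal (1/3000) ≤ (W2sq (interp (NoVanish.nu r)) (NoVanish.nu r)) ^ (1/2 : ℝ) := by
    have h1 := NoVanish.W2sq_lower hr hr2.2
    have h2 := ENNReal.rpow_le_rpow h1 (by norm_num : (0:ℝ) ≤ 1/2)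
    rw [ENNReal.ofReal_rpow_of_pos (by norm_num)] at h2
    rw [show ((1/9000000:ℝ))^(1/2:ℝ) = 1/3000 by
      rw [show (1/9000000:ℝ) = (1/3000)^(2:ℕ) by norm_num, ← Real.rpow_natCast (1/3000) 2,
        ← Real.rpow_mul (by norm_num)]
      norm_num] at h2
    exact h2
  have : ENNReal.ofReal (1/3000) ≤ ENNReal.ofReal (b r) := hlow.trans key
  rw [ENNReal.ofReal_le_ofReal_iff (hbnn r hr)] at this
  linarith
end
end
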